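/- Let M ≥ 3 be an integer and let a ∈ ℝ with a ≠ 0. Then the set of real numbers r for which the set {a·r^i : i = 0, 1, …, M−1} has complexity strictly less than M−1 is finite. -/

import Mathlib

/-- The (additive) complexity of a set `A` of reals: the smallest positive integer `θ`
for which there exist reals `x 1, ..., x θ, y 1, ..., y θ` with
`A ⊆ {x 1, y 1} + ... + {x θ, y θ}` (Minkowski sumset). -/
noncomputable def complexity (A : Set ℝ) : ℕ :=
  sInf {θ : ℕ | 0 < θ ∧ ∃ x y : Fin θ → ℝ,
    A ⊆ {t : ℝ | ∃ z : Fin θ → ℝ, (∀ i, z i = x i ∨ z i = y i) ∧ t = ∑ i, z i}}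

/-!
If `{a r^k : k < M}` lies in `{x₁, y₁} + ⋯ + {x_θ, y_θ}` with `θ < M - 1`, then each difference
`a r^(j+1) - a` equals `∑ᵢ σⱼᵢ (yᵢ - xᵢ)` for a sign matrix `σ` with `M - 1` rows and `θ` columns.
Its rows are linearly dependent, so some `c ≠ 0` gives `∑ⱼ cⱼ (a r^(j+1) - a) = 0`, i.e. `r` is a
root of the nonzero polynomial `∑ⱼ cⱼ (X^(j+1) - 1)`, which depends only on `σ`. There are only
finitely many sign matrices, hence finitely many such `r`.
-/

open Polynomial Matrix

theorem Matrix.exists_ne_zero_vecMul_eq_zero_of_card_lt {K m n : Type*} [Field K] [Fintype m]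
    [Fintype n] (A : Matrix m n K) (h : Fintype.card n < Fintype.card m) :
    ∃ c ≠ 0, c ᵥ* A = 0 := by
  have hker : LinearMap.ker A.vecMulLinear ≠ ⊥ :=
    LinearMap.ker_ne_bot_of_finrank_lt (by simpa using h)
  obtain ⟨c, hc, hc0⟩ := (Submodule.ne_bot_iff _).mp hker
  exact ⟨c, hc0, hc⟩

section PowSubOneCombination

variable {R : Type*} [CommRing R] {m : ℕ}

noncomputable def powSubOneCombination (c : Fin m → R) : R[X] :=
  ∑ j : Fin m, C (c j) * (X ^ ((j : ℕ) + 1) - 1)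

theorem coeff_powSubOneCombination (c : Fin m → R) (j : Fin m) :
    (powSubOneCombination c).coeff ((j : ℕ) + 1) = c j := by
  rw [powSubOneCombination, finsetSum_coeff, Finset.sum_eq_single j]
  · simp [coeff_one]
  · intro k _ hkj
    have : (j : ℕ) ≠ k := fun h => hkj (Fin.ext h).symm
    simp [coeff_X_pow, coeff_one, this]
  · simp

theorem powSubOneCombination_ne_zero {c : Fin m → R} (hc : c ≠ 0) :
    powSubOneCombination c ≠ 0 := by
  obtain ⟨j, hj⟩ := Function.ne_iff.mp hc
  intro h
  apply hj
  rw [← coeff_powSubOneCombination c j, h, coeff_zero, Pi.zero_apply]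

theorem eval_powSubOneCombination (c : Fin m → R) (r : R) :
    (powSubOneCombination c).eval r = ∑ j : Fin m, c j * (r ^ ((j : ℕ) + 1) - 1) := by
  simp [powSubOneCombination, eval_finsetSum]

end PowSubOneCombination

theorem finite_setOf_geom_sub_eq_mulVec {K n : Type*} [Field K] [Fintype n] {m : ℕ} {a : K}
    (ha : a ≠ 0) (W : Matrix (Fin m) n K) (hW : Fintype.card n < m) :
    {r : K | ∃ d, (fun j : Fin m => a * r ^ ((j : ℕ) + 1) - a) = W *ᵥ d}.Finite := by
  obtain ⟨c, hc, hcW⟩ := W.exists_ne_zero_vecMul_eq_zero_of_card_lt (by simpa using hW)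
  refine (finite_setOfPred_isRoot (powSubOneCombination_ne_zero hc)).subset ?_
  rintro r ⟨d, hd⟩
  have hdot : c ⬝ᵥ (fun j : Fin m => a * r ^ ((j : ℕ) + 1) - a) = 0 := by
    rw [hd, dotProduct_mulVec, hcW, zero_dotProduct]
  have : a * (powSubOneCombination c).eval r = 0 := by
    rw [← hdot, eval_powSubOneCombination, Finset.mul_sum, dotProduct]
    exact Finset.sum_congr rfl fun j _ => by ring
  exact (mul_eq_zero.mp this).resolve_left ha

section PairSumset

variable {θ : ℕ}

def pairSumset (x y : Fin θ → ℝ) : Set ℝ :=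
  {t | ∃ z : Fin θ → ℝ, (∀ i, z i = x i ∨ z i = y i) ∧ t = ∑ i, z i}

theorem exists_subset_pairSumset_complexity {A : Set ℝ}
    (hA : ∃ θ, 0 < θ ∧ ∃ x y : Fin θ → ℝ, A ⊆ pairSumset x y) :
    ∃ x y : Fin (complexity A) → ℝ, A ⊆ pairSumset x y :=
  (Nat.sInf_mem (s := {θ | 0 < θ ∧ ∃ x y : Fin θ → ℝ, A ⊆ pairSumset x y}) hA).2

theorem range_subset_pairSumset (t : Fin θ → ℝ) : Set.range t ⊆ pairSumset 0 t := by
  rintro _ ⟨k, rfl⟩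
  refine ⟨Pi.single k (t k), fun i => ?_, by simp⟩
  by_cases hik : i = k
  · subst hik; simp
  · simp [hik]

theorem exists_sign_mul_eq_sub {R : Type*} [Ring R] {x y u v : R} (hu : u = x ∨ u = y)
    (hv : v = x ∨ v = y) : ∃ s : SignType, u - v = s * (y - x) := by
  rcases hu with rfl | rfl <;> rcases hv with rfl | rfl
  exacts [⟨0, by simp⟩, ⟨-1, by simp⟩, ⟨1, by simp⟩, ⟨0, by simp⟩]

theorem exists_sign_mulVec_eq_sub {m : ℕ} {x y : Fin θ → ℝ} {s : Fin m → ℝ} {t : ℝ}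
    (hs : ∀ j, s j ∈ pairSumset x y) (ht : t ∈ pairSumset x y) :
    ∃ σ : Matrix (Fin m) (Fin θ) SignType, (fun j => s j - t) = σ.map (↑) *ᵥ (y - x) := by
  choose z hz hzs using hs
  obtain ⟨w, hw, rfl⟩ := ht
  choose σ hσ using fun j i => exists_sign_mul_eq_sub (hz j i) (hw i)
  refine ⟨σ, funext fun j => ?_⟩
  simp only [hzs j, ← Finset.sum_sub_distrib, hσ, mulVec, dotProduct, Pi.sub_apply]
  rfl

end PairSumset

/-- For fixed nonzero `a`, all but finitely many common ratios `r` yield geometric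
progressions of length `M` with the highest possible complexity `M - 1`. -/
theorem stmt_14 (M : ℕ) (hM : 3 ≤ M) (a : ℝ) (ha : a ≠ 0) :
    {r : ℝ | complexity {t : ℝ | ∃ i : ℕ, i < M ∧ t = a * r ^ i} < M - 1}.Finite := by
  refine (Set.finite_iUnion fun θ : Fin (M - 1) =>
    Set.finite_iUnion fun σ : Matrix (Fin (M - 1)) (Fin θ) SignType =>
      finite_setOf_geom_sub_eq_mulVec ha (σ.map (↑)) (by simp)).subset fun r hr => ?_
  set A := {t : ℝ | ∃ i : ℕ, i < M ∧ t = a * r ^ i}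
  have hA : A = Set.range fun k : Fin M => a * r ^ (k : ℕ) := by
    ext t; simp [A, Fin.exists_iff, eq_comm]
  obtain ⟨x, y, hxy⟩ := exists_subset_pairSumset_complexity
    ⟨M, by omega, 0, _, hA ▸ range_subset_pairSumset _⟩
  have hmem : ∀ k < M, a * r ^ k ∈ pairSumset x y := fun k hk => hxy ⟨k, hk, rfl⟩
  obtain ⟨σ, hσ⟩ := exists_sign_mulVec_eq_sub (fun j : Fin (M - 1) => hmem (j + 1) (by omega))
    (hmem 0 (by omega))
  simp only [Set.mem_iUnion]
  exact ⟨⟨_, hr⟩, σ, y - x, by simpa using hσ⟩
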